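/- arXiv:2103.06069 — 8 statements merged into one kernel-verified Lean document; each statement's English description precedes it below -/
import Mathlib

section
/- The grim reaper Schwarz function S(z,t) = z + Log(e^{t−z} − 1) (principal complex logarithm) satisfies the curve-shortening Schwarz function equation: for every (z,t) ∈ ℂ × ℝ such that e^{t−z} − 1 does not lie in the closed negative real axis (−∞,0], one has S_t = e^{t−z}/(e^{t−z} − 1), S_z = −1/(e^{t−z} − 1), S_zz = −e^{t−z}/(e^{t−z} − 1)², and therefore S_t S_z = S_zz. -/
/-!
With `E = e^{t−z}`, the chain rule and `(Log w)' = 1/w` on the slit plane give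
`S_t = E/(E−1)` and `S_z = 1 − E/(E−1) = −1/(E−1)`, and differentiating once more gives
`S_zz = −E/(E−1)²`; the equation `S_t S_z = S_zz` is then an identity of rational functions in `E`.
-/

open Complex

namespace Complex

lemma mem_slitPlane_of_forall_nonpos_ne {w : ℂ} (h : ∀ x : ℝ, x ≤ 0 → w ≠ x) :
    w ∈ slitPlane :=
  mem_slitPlane_iff_not_le_zero.2 fun hw ↦
    h w.re (nonpos_iff.1 hw).1 (ext rfl (by simpa using (nonpos_iff.1 hw).2))

variable {𝕜 : Type*} [NontriviallyNormedField 𝕜] [NormedAlgebra 𝕜 ℂ]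

lemma _root_.HasDerivAt.clog_exp_sub_one {f : 𝕜 → ℂ} {f' : ℂ} {x : 𝕜} (hf : HasDerivAt f f' x)
    (hx : exp (f x) - 1 ∈ slitPlane) :
    HasDerivAt (fun y ↦ log (exp (f y) - 1)) (exp (f x) * f' / (exp (f x) - 1)) x := by
  rw [div_eq_inv_mul]
  exact (hasDerivAt_log hx).comp x (hf.cexp.sub_const 1)

end Complex

lemma hasDerivAt_grimReaper_time (z : ℂ) {t : ℝ} (ht : exp (t - z) - 1 ∈ slitPlane) :
    HasDerivAt (fun s : ℝ ↦ z + log (exp (s - z) - 1))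
      (exp (t - z) / (exp (t - z) - 1)) t := by
  simpa using ((ofRealCLM.hasDerivAt (x := t)).sub_const z).clog_exp_sub_one ht |>.const_add z

lemma hasDerivAt_grimReaper_space (a : ℂ) {z : ℂ} (hz : exp (a - z) - 1 ∈ slitPlane) :
    HasDerivAt (fun w : ℂ ↦ w + log (exp (a - w) - 1)) (-1 / (exp (a - z) - 1)) z := by
  refine ((hasDerivAt_id' z).add
    (((hasDerivAt_id' z).const_sub a).clog_exp_sub_one hz)).congr_deriv ?_
  field_simp [slitPlane_ne_zero hz]
  ring

lemma hasDerivAt_neg_one_div_exp_sub_one (a : ℂ) {z : ℂ} (hz : exp (a - z) ≠ 1) :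
    HasDerivAt (fun w : ℂ ↦ -1 / (exp (a - w) - 1)) (-exp (a - z) / (exp (a - z) - 1) ^ 2) z := by
  have h := ((((hasDerivAt_id' z).const_sub a).cexp.sub_const 1).inv (sub_ne_zero.2 hz)).neg
  simp only [neg_div, one_div]
  refine h.congr_deriv ?_
  ring

/-- The grim reaper Schwarz function `S(z,t) = z + Log(e^{t−z} − 1)` satisfies the
curve-shortening Schwarz function equation `S_t S_z = S_zz` wherever `e^{t−z} − 1`
avoids the closed negative real axis. -/
theorem grim_reaper_schwarz (z : ℂ) (t : ℝ)
    (hslit : ∀ x : ℝ, x ≤ 0 → Complex.exp ((t : ℂ) - z) - 1 ≠ (x : ℂ)) :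
    HasDerivAt (fun s : ℝ => z + Complex.log (Complex.exp ((s : ℂ) - z) - 1))
      (Complex.exp ((t : ℂ) - z) / (Complex.exp ((t : ℂ) - z) - 1)) t ∧
    HasDerivAt (fun w : ℂ => w + Complex.log (Complex.exp ((t : ℂ) - w) - 1))
      (-1 / (Complex.exp ((t : ℂ) - z) - 1)) z ∧
    HasDerivAt (fun w : ℂ => -1 / (Complex.exp ((t : ℂ) - w) - 1))
      (-Complex.exp ((t : ℂ) - z) / (Complex.exp ((t : ℂ) - z) - 1) ^ 2) z ∧
    (Complex.exp ((t : ℂ) - z) / (Complex.exp ((t : ℂ) - z) - 1)) *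
        (-1 / (Complex.exp ((t : ℂ) - z) - 1))
      = -Complex.exp ((t : ℂ) - z) / (Complex.exp ((t : ℂ) - z) - 1) ^ 2 := by
  have hE := mem_slitPlane_of_forall_nonpos_ne hslit
  exact ⟨hasDerivAt_grimReaper_time z hE, hasDerivAt_grimReaper_space t hE,
    hasDerivAt_neg_one_div_exp_sub_one t (sub_ne_zero.1 (slitPlane_ne_zero hE)), by rw [div_mul_div_comm, mul_neg_one, ← sq]⟩
end

section
/- The paperclip Schwarz function S(z,t) = Log((e^t − e^z)/(1 − e^{t+z})) (principal complex logarithm) satisfies the curve-shortening Schwarz function equation: for every (z,t) ∈ ℂ × ℝ such that e^t − e^z ≠ 0, 1 − e^{t+z} ≠ 0, and the quotient (e^t − e^z)/(1 − e^{t+z}) does not lie in (−∞,0], one has S_z = e^z(e^{2t} − 1)/((e^t − e^z)(1 − e^{t+z})), S_t = e^t(1 − e^{2z})/((e^t − e^z)(1 − e^{t+z})), and S_t S_z = S_zz. -/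
/-!
Write `T = e^t`, `W = e^z` and `D = (T - W)(1 - TW)`, so that `S = log ((T - W) / (1 - TW))`.
The logarithmic derivative of the quotient gives `S_z = W (T² - 1) / D` and
`S_t = T (1 - W²) / D`. By the quotient rule `S_zz = (T² - 1) W (D - W ∂_W D) / D²`, and
`D - W ∂_W D = T (1 - W²)`, which is `S_t S_z`.
-/

open Complex

lemma Complex.mem_slitPlane_of_forall_ne_ofReal {q : ℂ} (h : ∀ x : ℝ, x ≤ 0 → q ≠ x) :
    q ∈ slitPlane := by
  rw [mem_slitPlane_iff_not_le_zero, nonpos_iff]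
  rintro ⟨hre, him⟩
  exact h q.re hre (Complex.ext rfl (by simpa using him))

theorem HasDerivAt.clog_div {f g : ℂ → ℂ} {f' g' x : ℂ} (hf : HasDerivAt f f' x)
    (hg : HasDerivAt g g' x) (hg0 : g x ≠ 0) (hmem : f x / g x ∈ slitPlane) :
    HasDerivAt (fun w ↦ Complex.log (f w / g w)) ((f' * g x - f x * g') / (f x * g x)) x := by
  have hf0 : f x ≠ 0 := fun h ↦ by simp [h] at hmem
  refine ((hf.div hg hg0).clog hmem).congr_deriv ?_
  simp only [Pi.div_apply]
  field_simp

theorem hasDerivAt_one_sub_exp_const_add (t z : ℂ) :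
    HasDerivAt (fun w ↦ 1 - exp (t + w)) (-exp (t + z)) z := by
  simpa using (((hasDerivAt_id z).const_add t).cexp).const_sub 1

section PaperclipSchwarz

variable {t z : ℂ}

theorem hasDerivAt_paperclipSchwarz_space (hB : 1 - exp (t + z) ≠ 0)
    (hmem : (exp t - exp z) / (1 - exp (t + z)) ∈ slitPlane) :
    HasDerivAt (fun w ↦ log ((exp t - exp w) / (1 - exp (t + w))))
      (exp z * (exp (2 * t) - 1) / ((exp t - exp z) * (1 - exp (t + z)))) z := by
  refine (((hasDerivAt_exp z).const_sub _).clog_div (hasDerivAt_one_sub_exp_const_add t z) hB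
    hmem).congr_deriv ?_
  simp only [exp_add, two_mul]
  ring

theorem hasDerivAt_paperclipSchwarz_time (hB : 1 - exp (t + z) ≠ 0)
    (hmem : (exp t - exp z) / (1 - exp (t + z)) ∈ slitPlane) :
    HasDerivAt (fun s ↦ log ((exp s - exp z) / (1 - exp (s + z))))
      (exp t * (1 - exp (2 * z)) / ((exp t - exp z) * (1 - exp (t + z)))) t := by
  have hden : HasDerivAt (fun s ↦ 1 - exp (s + z)) (-exp (t + z)) t := by
    simpa using (((hasDerivAt_id t).add_const z).cexp).const_sub 1
  refine (((hasDerivAt_exp t).sub_const _).clog_div hden hB hmem).congr_deriv ?_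
  simp only [exp_add, two_mul]
  ring

theorem hasDerivAt_paperclipSchwarz_space_deriv (hA : exp t - exp z ≠ 0)
    (hB : 1 - exp (t + z) ≠ 0) :
    HasDerivAt (fun w ↦ exp w * (exp (2 * t) - 1) / ((exp t - exp w) * (1 - exp (t + w))))
      (exp t * (1 - exp (2 * z)) / ((exp t - exp z) * (1 - exp (t + z))) *
        (exp z * (exp (2 * t) - 1) / ((exp t - exp z) * (1 - exp (t + z))))) z := by
  refine (((hasDerivAt_exp z).mul_const _).div (((hasDerivAt_exp z).const_sub _).mul
    (hasDerivAt_one_sub_exp_const_add t z)) (mul_ne_zero hA hB)).congr_deriv ?_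
  rw [exp_add] at hB ⊢
  simp only [Pi.mul_apply, two_mul, exp_add]
  field_simp
  ring

end PaperclipSchwarz

/-- The paperclip Schwarz function `S(z,t) = Log((e^t − e^z)/(1 − e^{t+z}))`
satisfies the curve-shortening Schwarz function equation `S_t S_z = S_zz`. -/
theorem paperclip_schwarz (z : ℂ) (t : ℝ)
    (hA : Complex.exp (t : ℂ) - Complex.exp z ≠ 0)
    (hB : 1 - Complex.exp ((t : ℂ) + z) ≠ 0)
    (hslit : ∀ x : ℝ, x ≤ 0 →
      (Complex.exp (t : ℂ) - Complex.exp z) / (1 - Complex.exp ((t : ℂ) + z)) ≠ (x : ℂ)) :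
    HasDerivAt
      (fun w : ℂ =>
        Complex.log ((Complex.exp (t : ℂ) - Complex.exp w) / (1 - Complex.exp ((t : ℂ) + w))))
      (Complex.exp z * (Complex.exp (2 * (t : ℂ)) - 1) /
        ((Complex.exp (t : ℂ) - Complex.exp z) * (1 - Complex.exp ((t : ℂ) + z)))) z ∧
    HasDerivAt
      (fun s : ℝ =>
        Complex.log ((Complex.exp (s : ℂ) - Complex.exp z) / (1 - Complex.exp ((s : ℂ) + z))))
      (Complex.exp (t : ℂ) * (1 - Complex.exp (2 * z)) /
        ((Complex.exp (t : ℂ) - Complex.exp z) * (1 - Complex.exp ((t : ℂ) + z)))) t ∧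
    HasDerivAt
      (fun w : ℂ =>
        Complex.exp w * (Complex.exp (2 * (t : ℂ)) - 1) /
          ((Complex.exp (t : ℂ) - Complex.exp w) * (1 - Complex.exp ((t : ℂ) + w))))
      ((Complex.exp (t : ℂ) * (1 - Complex.exp (2 * z)) /
          ((Complex.exp (t : ℂ) - Complex.exp z) * (1 - Complex.exp ((t : ℂ) + z)))) *
        (Complex.exp z * (Complex.exp (2 * (t : ℂ)) - 1) /
          ((Complex.exp (t : ℂ) - Complex.exp z) * (1 - Complex.exp ((t : ℂ) + z))))) z := by
  have hmem := mem_slitPlane_of_forall_ne_ofReal hslit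
  exact ⟨hasDerivAt_paperclipSchwarz_space hB hmem,
    (hasDerivAt_paperclipSchwarz_time hB hmem).comp_ofReal,
    hasDerivAt_paperclipSchwarz_space_deriv hA hB⟩
end

section
/- Reduction of the functional-differential equation to a real ODE: let r : (−π,π) → ℝ and α : (−π,π) → ℝ be differentiable with r even, r > 0, and α odd with values in (−π/2, π/2), and set h(θ) = r(θ)·e^{iα(θ)} (complex-valued). Then h(−θ) = conj(h(θ)), the function θ ↦ Log(h(−θ)/h(θ)) equals −2iα(θ), and the equation d/dθ [Log(h(−θ)/h(θ))] = i(h(θ) + h(−θ)) holds for all θ ∈ (−π,π) if and only if α′(θ) = −r(θ)·cos(α(θ)) for all θ ∈ (−π,π). -/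
/-- Reduction of the functional-differential equation
`d/dθ Log(h(−θ)/h(θ)) = i(h(θ) + h(−θ))` for `h(θ) = r(θ)e^{iα(θ)}`
(with `r` even positive, `α` odd with values in `(−π/2,π/2)`, both differentiable
on `(−π,π)`) to the real ODE `α′ = −r cos α`. -/
theorem functional_eq_reduction (r α : ℝ → ℝ) (h : ℝ → ℂ)
    (hh : ∀ θ : ℝ, h θ = (r θ : ℂ) * Complex.exp ((α θ : ℂ) * Complex.I))
    (hrdiff : ∀ θ ∈ Set.Ioo (-Real.pi) Real.pi, DifferentiableAt ℝ r θ)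
    (hadiff : ∀ θ ∈ Set.Ioo (-Real.pi) Real.pi, DifferentiableAt ℝ α θ)
    (hreven : ∀ θ ∈ Set.Ioo (-Real.pi) Real.pi, r (-θ) = r θ)
    (hrpos : ∀ θ ∈ Set.Ioo (-Real.pi) Real.pi, 0 < r θ)
    (haodd : ∀ θ ∈ Set.Ioo (-Real.pi) Real.pi, α (-θ) = -α θ)
    (haran : ∀ θ ∈ Set.Ioo (-Real.pi) Real.pi,
      α θ ∈ Set.Ioo (-(Real.pi / 2)) (Real.pi / 2)) :
    (∀ θ ∈ Set.Ioo (-Real.pi) Real.pi, h (-θ) = starRingEnd ℂ (h θ)) ∧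
    (∀ θ ∈ Set.Ioo (-Real.pi) Real.pi,
      Complex.log (h (-θ) / h θ) = -2 * Complex.I * (α θ : ℂ)) ∧
    ((∀ θ ∈ Set.Ioo (-Real.pi) Real.pi,
        deriv (fun φ : ℝ => Complex.log (h (-φ) / h φ)) θ = Complex.I * (h θ + h (-θ)))
      ↔ (∀ θ ∈ Set.Ioo (-Real.pi) Real.pi,
        deriv α θ = -(r θ * Real.cos (α θ)))) := by
  have conj1 : ∀ θ ∈ Set.Ioo (-Real.pi) Real.pi, h (-θ) = starRingEnd ℂ (h θ) := by
    intro θ hθ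
    rw [hh, hh, hreven θ hθ, haodd θ hθ, map_mul, Complex.conj_ofReal,
      ← Complex.exp_conj]
    congr 1
    simp [map_mul, Complex.conj_ofReal, Complex.conj_I]
  have hlog : ∀ θ ∈ Set.Ioo (-Real.pi) Real.pi,
      Complex.log (h (-θ) / h θ) = -2 * Complex.I * (α θ : ℂ) := by
    intro θ hθ
    have hr0 : (r θ : ℂ) ≠ 0 := by
      exact_mod_cast (hrpos θ hθ).ne'
    have hquot : h (-θ) / h θ = Complex.exp ((-2 * (α θ) : ℝ) * Complex.I) := by
      rw [hh, hh, hreven θ hθ, haodd θ hθ, mul_div_mul_left _ _ hr0,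
        ← Complex.exp_sub]
      congr 1
      push_cast
      ring
    rw [hquot, Complex.log_exp]
    · push_cast; ring
    · simp only [Complex.mul_I_im, Complex.ofReal_re]
      have := (haran θ hθ).2
      linarith
    · simp only [Complex.mul_I_im, Complex.ofReal_re]
      have := (haran θ hθ).1
      linarith
  refine ⟨conj1, hlog, ?_⟩
  have hderiv : ∀ θ ∈ Set.Ioo (-Real.pi) Real.pi,
      deriv (fun φ : ℝ => Complex.log (h (-φ) / h φ)) θ
        = -2 * Complex.I * ((deriv α θ : ℝ) : ℂ) := by
    intro θ hθ
    have heq : (fun φ : ℝ => Complex.log (h (-φ) / h φ))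
        =ᶠ[nhds θ] (fun φ : ℝ => -2 * Complex.I * (α φ : ℂ)) := by
      filter_upwards [isOpen_Ioo.eventually_mem hθ] with φ hφ
      exact hlog φ hφ
    rw [heq.deriv_eq]
    have hd : HasDerivAt (fun φ : ℝ => -2 * Complex.I * (α φ : ℂ))
        (-2 * Complex.I * ((deriv α θ : ℝ) : ℂ)) θ :=
      ((hadiff θ hθ).hasDerivAt.ofReal_comp).const_mul (-2 * Complex.I)
    exact hd.deriv
  have hsum : ∀ θ ∈ Set.Ioo (-Real.pi) Real.pi,
      Complex.I * (h θ + h (-θ)) = -2 * Complex.I * (-(r θ * Real.cos (α θ)) : ℝ) := by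
    intro θ hθ
    rw [hh, hh, hreven θ hθ, haodd θ hθ]
    have : Complex.exp ((α θ : ℂ) * Complex.I) + Complex.exp ((-(α θ) : ℝ) * Complex.I)
        = 2 * Real.cos (α θ) := by
      rw [Complex.ofReal_cos, Complex.cos]
      push_cast
      ring_nf
    push_cast
    push_cast at this
    rw [show ((r θ : ℂ)) * Complex.exp ((α θ : ℂ) * Complex.I)
        + (r θ : ℂ) * Complex.exp (-(α θ : ℂ) * Complex.I)
        = (r θ : ℂ) * (Complex.exp ((α θ : ℂ) * Complex.I)
          + Complex.exp (-(α θ : ℂ) * Complex.I)) by ring, this]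
    ring
  constructor
  · intro H θ hθ
    have := H θ hθ
    rw [hderiv θ hθ, hsum θ hθ] at this
    have h2 : (-2 * Complex.I) ≠ 0 := by simp [Complex.I_ne_zero]
    have := mul_left_cancel₀ h2 this
    exact_mod_cast this
  · intro H θ hθ
    rw [hderiv θ hθ, hsum θ hθ, H θ hθ]
end

section
/- General solution of the functional-differential equation: let α : (−π,π) → ℝ be odd, differentiable, with values in (−π/2, π/2) and α′(θ) ≠ 0 for all θ, and set h(θ) = −α′(θ)·(1 + i·tan(α(θ))). Then h(−θ) = conj(h(θ)), h(−θ)/h(θ) = e^{−2iα(θ)}, and h satisfies d/dθ [Log(h(−θ)/h(θ))] = i(h(θ) + h(−θ)) for all θ ∈ (−π,π), i.e. −2iα′(θ) = i(h(θ) + h(−θ)). -/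
/-! Writing `h(θ) = −α′(θ)/cos α(θ) · e^{iα(θ)}` and using that `α′` is even when `α` is odd,
`h(−θ)` is `h(θ)` with the phase reversed, so `h(−θ)/h(θ) = e^{−2iα(θ)}`. Since `|2α| < π`,
the principal logarithm of this ratio is `−2iα(θ)`, whose derivative `−2iα′(θ)` equals
`i(h(θ) + h(−θ))` because the imaginary parts `∓α′ tan α` cancel. -/

open Complex ComplexConjugate

theorem deriv_neg_eq_of_odd_on {F : Type*} [NormedAddCommGroup F] [NormedSpace ℝ F]
    {f : ℝ → F} {s : Set ℝ} (hs : IsOpen s) (hodd : ∀ x ∈ s, f (-x) = -f x)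
    {x : ℝ} (hx : x ∈ s) : deriv f (-x) = deriv f x := by
  have hev : (fun y => f (-y)) =ᶠ[nhds x] fun y => -f y :=
    Filter.eventually_of_mem (hs.mem_nhds hx) hodd
  have := hev.deriv_eq
  rwa [deriv_comp_neg, deriv.fun_neg, neg_inj] at this

theorem log_exp_neg_two_mul_I {a : ℝ} (ha : a ∈ Set.Ico (-(Real.pi / 2)) (Real.pi / 2)) :
    log (exp (-2 * I * a)) = -2 * I * a := by
  have him : (-2 * I * (a : ℂ)).im = -2 * a := by simp
  apply log_exp <;> rw [him] <;> linarith [ha.1, ha.2]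

/-- `profile d a` is the paper's `h(θ)` evaluated at `α′(θ) = d` and `α(θ) = a`. -/
noncomputable def profile (d a : ℝ) : ℂ := -(d : ℂ) * (1 + I * (Real.tan a : ℂ))

theorem profile_neg_angle (d a : ℝ) : profile d (-a) = conj (profile d a) := by
  simp only [profile, Real.tan_neg, map_mul, map_add, map_neg, map_one, conj_ofReal, conj_I]
  push_cast
  ring

theorem profile_add_profile_neg_angle (d a : ℝ) : profile d a + profile d (-a) = -2 * d := by
  simp only [profile, Real.tan_neg]
  push_cast
  ring

theorem profile_eq_mul_exp {d a : ℝ} (ha : Real.cos a ≠ 0) :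
    profile d a = -(d : ℂ) / Real.cos a * exp (a * I) := by
  have hc : cos (a : ℂ) ≠ 0 := by exact_mod_cast ha
  rw [profile, exp_mul_I, ofReal_tan, tan_eq_sin_div_cos, ofReal_cos]
  field_simp

theorem profile_neg_angle_div {d a : ℝ} (hd : d ≠ 0) (ha : Real.cos a ≠ 0) :
    profile d (-a) / profile d a = exp (-2 * I * a) := by
  have hscale : -(d : ℂ) / Real.cos a ≠ 0 := by
    have : (Real.cos a : ℂ) ≠ 0 := by exact_mod_cast ha
    exact div_ne_zero (neg_ne_zero.mpr (ofReal_ne_zero.mpr hd)) this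
  rw [profile_eq_mul_exp ha, profile_eq_mul_exp (by rwa [Real.cos_neg]), Real.cos_neg,
    mul_div_mul_left _ _ hscale, ← exp_sub]
  congr 1
  push_cast
  ring

/-- General solution of the functional-differential equation: for `α` odd,
differentiable on `(−π,π)` with values in `(−π/2,π/2)` and `α′ ≠ 0`, the function
`h(θ) = −α′(θ)(1 + i tan α(θ))` satisfies `h(−θ) = conj h(θ)`,
`h(−θ)/h(θ) = e^{−2iα(θ)}`, and `d/dθ Log(h(−θ)/h(θ)) = i(h(θ) + h(−θ))`,
i.e. `−2iα′(θ) = i(h(θ) + h(−θ))`. -/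
theorem functional_eq_general_solution (α : ℝ → ℝ) (h : ℝ → ℂ)
    (hadiff : ∀ θ ∈ Set.Ioo (-Real.pi) Real.pi, DifferentiableAt ℝ α θ)
    (haodd : ∀ θ ∈ Set.Ioo (-Real.pi) Real.pi, α (-θ) = -α θ)
    (haran : ∀ θ ∈ Set.Ioo (-Real.pi) Real.pi,
      α θ ∈ Set.Ioo (-(Real.pi / 2)) (Real.pi / 2))
    (hane : ∀ θ ∈ Set.Ioo (-Real.pi) Real.pi, deriv α θ ≠ 0)
    (hh : ∀ θ : ℝ, h θ =
      -((deriv α θ : ℝ) : ℂ) * (1 + Complex.I * (Real.tan (α θ) : ℂ))) :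
    (∀ θ ∈ Set.Ioo (-Real.pi) Real.pi, h (-θ) = starRingEnd ℂ (h θ)) ∧
    (∀ θ ∈ Set.Ioo (-Real.pi) Real.pi,
      h (-θ) / h θ = Complex.exp (-2 * Complex.I * (α θ : ℂ))) ∧
    (∀ θ ∈ Set.Ioo (-Real.pi) Real.pi,
      deriv (fun φ : ℝ => Complex.log (h (-φ) / h φ)) θ = Complex.I * (h θ + h (-θ))) ∧
    (∀ θ ∈ Set.Ioo (-Real.pi) Real.pi,
      -2 * Complex.I * ((deriv α θ : ℝ) : ℂ) = Complex.I * (h θ + h (-θ))) := by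
  have hpos : ∀ θ, h θ = profile (deriv α θ) (α θ) := hh
  have hneg : ∀ θ ∈ Set.Ioo (-Real.pi) Real.pi, h (-θ) = profile (deriv α θ) (-α θ) :=
    fun θ hθ => by rw [hpos, haodd θ hθ, deriv_neg_eq_of_odd_on isOpen_Ioo haodd hθ]
  have hcos : ∀ θ ∈ Set.Ioo (-Real.pi) Real.pi, Real.cos (α θ) ≠ 0 :=
    fun θ hθ => (Real.cos_pos_of_mem_Ioo (haran θ hθ)).ne'
  have hratio : ∀ θ ∈ Set.Ioo (-Real.pi) Real.pi, h (-θ) / h θ = exp (-2 * I * α θ) :=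
    fun θ hθ => by rw [hneg θ hθ, hpos, profile_neg_angle_div (hane θ hθ) (hcos θ hθ)]
  have hsum : ∀ θ ∈ Set.Ioo (-Real.pi) Real.pi, -2 * I * ((deriv α θ : ℝ) : ℂ) = I * (h θ + h (-θ)) :=
    fun θ hθ => by rw [hneg θ hθ, hpos, profile_add_profile_neg_angle]; ring
  refine ⟨fun θ hθ => by rw [hneg θ hθ, hpos, profile_neg_angle], hratio, fun θ hθ => ?_, hsum⟩
  have hlog : (fun φ => log (h (-φ) / h φ)) =ᶠ[nhds θ] fun φ => -2 * I * α φ :=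
    Filter.eventually_of_mem (isOpen_Ioo.mem_nhds hθ) fun φ hφ => by
      dsimp only
      rw [hratio φ hφ, log_exp_neg_two_mul_I (Set.Ioo_subset_Ico_self (haran φ hφ))]
  rw [hlog.deriv_eq, ((hadiff θ hθ).hasDerivAt.ofReal_comp.const_mul (-2 * I)).deriv]
  exact hsum θ hθ
end

section
/- Equivalence of the parametric paperclip with the implicit paperclip: let t < 0, set a = (1 − e^{2t})^{−1/2} (so a > 1), and for θ ∈ (−π, π) let z = −Log(a + e^{iθ}) + ½·log(a² − 1), using the principal complex logarithm. Then cosh(Re z) = e^{−t}·cos(Im z); that is, the parametric curve coincides with the paperclip solution cosh x = e^{−t}cos y. -/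
/-!
Write `w = a + e^{iθ}`, `r = |w|` and `s = √(a² − 1)`. Then `Re z = log (s / r)` and
`Im z = −arg w`, so `cosh (Re z) = (s² + r²) / (2 s r)` and `cos (Im z) = Re w / r`.
The identity `r² + s² = 2 a Re w`, i.e. `|a + e^{iθ}|² = a² + 2a cos θ + 1`, turns the first
into `(a / s) cos (Im z)`, and `a / s = e^{−t}` for `a² = 1 / (1 − e^{2t})`.
-/

open Complex

noncomputable def paperclipParam (a θ : ℝ) : ℂ :=
  -log ((a : ℂ) + exp (θ * I)) + ((1 / 2 * Real.log (a ^ 2 - 1) : ℝ) : ℂ)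

lemma re_ofReal_add_exp_mul_I (a θ : ℝ) : ((a : ℂ) + exp (θ * I)).re = a + Real.cos θ := by
  simp [exp_ofReal_mul_I_re]

lemma norm_sq_ofReal_add_exp_mul_I (a θ : ℝ) :
    ‖(a : ℂ) + exp (θ * I)‖ ^ 2 = a ^ 2 + 2 * a * Real.cos θ + 1 := by
  rw [Complex.sq_norm, normSq_apply, re_ofReal_add_exp_mul_I]
  simp only [add_im, ofReal_im, exp_ofReal_mul_I_im, zero_add]
  nlinarith [Real.sin_sq_add_cos_sq θ]

lemma re_neg_log_add_ofReal (w : ℂ) (x : ℝ) : (-log w + x).re = x - Real.log ‖w‖ := by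
  simp [log_re]; ring

lemma cos_im_neg_log_add_ofReal {w : ℂ} (hw : w ≠ 0) (x : ℝ) :
    Real.cos (-log w + x).im = w.re / ‖w‖ := by
  simp [log_im, cos_arg hw]

theorem cosh_re_paperclipParam {a : ℝ} (ha : 1 < a) (θ : ℝ) :
    Real.cosh (paperclipParam a θ).re = a / √(a ^ 2 - 1) * Real.cos (paperclipParam a θ).im := by
  set w : ℂ := (a : ℂ) + exp (θ * I)
  have hw_re : 0 < w.re := by
    rw [re_ofReal_add_exp_mul_I]; linarith [Real.neg_one_le_cos θ]
  have hw : w ≠ 0 := fun h => by simp [h] at hw_re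
  have hr : 0 < ‖w‖ := norm_pos_iff.mpr hw
  have hs2 : 0 < a ^ 2 - 1 := by nlinarith
  have hs : 0 < √(a ^ 2 - 1) := Real.sqrt_pos.mpr hs2
  have hre : (paperclipParam a θ).re = Real.log (√(a ^ 2 - 1) / ‖w‖) := by
    rw [paperclipParam, re_neg_log_add_ofReal, Real.log_div hs.ne' hr.ne', Real.log_sqrt hs2.le]
    ring
  have hnorm : ‖w‖ ^ 2 + √(a ^ 2 - 1) ^ 2 = 2 * a * w.re := by
    rw [norm_sq_ofReal_add_exp_mul_I, Real.sq_sqrt hs2.le, re_ofReal_add_exp_mul_I]; ring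
  rw [hre, Real.cosh_log (by positivity), paperclipParam, cos_im_neg_log_add_ofReal hw]
  field_simp
  linear_combination hnorm

lemma sq_rpow_neg_half {x : ℝ} (hx : 0 < x) : (x ^ (-(1 : ℝ) / 2)) ^ 2 = x⁻¹ := by
  rw [← Real.rpow_natCast, ← Real.rpow_mul hx.le]
  norm_num [Real.rpow_neg_one]

lemma div_sqrt_sq_sub_one {a : ℝ} (ha : 0 ≤ a) : a / √(a ^ 2 - 1) = √(a ^ 2 / (a ^ 2 - 1)) := by
  rw [Real.sqrt_div (sq_nonneg a), Real.sqrt_sq ha]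

noncomputable def paperclipScale (t : ℝ) : ℝ := (1 - Real.exp (2 * t)) ^ (-(1 : ℝ) / 2)

section paperclipScale

variable {t : ℝ} (ht : t < 0)

include ht

lemma one_sub_exp_two_mul_pos : 0 < 1 - Real.exp (2 * t) :=
  sub_pos.mpr (Real.exp_lt_one_iff.mpr (by linarith))

lemma paperclipScale_pos : 0 < paperclipScale t :=
  Real.rpow_pos_of_pos (one_sub_exp_two_mul_pos ht) _

lemma sq_paperclipScale : paperclipScale t ^ 2 = (1 - Real.exp (2 * t))⁻¹ :=
  sq_rpow_neg_half (one_sub_exp_two_mul_pos ht)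

lemma one_lt_paperclipScale : 1 < paperclipScale t := by
  have hb := one_sub_exp_two_mul_pos ht
  rw [← one_lt_sq_iff₀ (paperclipScale_pos ht).le, sq_paperclipScale ht]
  exact one_lt_inv₀ hb |>.mpr (by linarith [Real.exp_pos (2 * t)])

lemma exp_neg_eq_paperclipScale_div :
    Real.exp (-t) = paperclipScale t / √(paperclipScale t ^ 2 - 1) := by
  have hb := one_sub_exp_two_mul_pos ht
  have hexp : Real.exp (2 * t) = Real.exp t ^ 2 := by rw [sq, ← Real.exp_add]; ring_nf
  have hq : paperclipScale t ^ 2 / (paperclipScale t ^ 2 - 1) = Real.exp (-t) ^ 2 := by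
    rw [sq_paperclipScale ht, Real.exp_neg]
    rw [hexp] at hb ⊢
    field_simp
    ring
  rw [div_sqrt_sq_sub_one (paperclipScale_pos ht).le, hq, Real.sqrt_sq (Real.exp_pos _).le]

end paperclipScale

theorem paperclip_parametric_eq_implicit_general (t θ : ℝ) (ht : t < 0) :
    Real.cosh
        ((-Complex.log (((1 - Real.exp (2 * t)) ^ (-(1 : ℝ) / 2) : ℝ) +
            Complex.exp ((θ : ℂ) * Complex.I)) +
          (((1 / 2) * Real.log (((1 - Real.exp (2 * t)) ^ (-(1 : ℝ) / 2) : ℝ) ^ 2 - 1) : ℝ) :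
            ℂ)).re) =
      Real.exp (-t) *
        Real.cos
          ((-Complex.log (((1 - Real.exp (2 * t)) ^ (-(1 : ℝ) / 2) : ℝ) +
              Complex.exp ((θ : ℂ) * Complex.I)) +
            (((1 / 2) * Real.log (((1 - Real.exp (2 * t)) ^ (-(1 : ℝ) / 2) : ℝ) ^ 2 - 1) : ℝ) :
              ℂ)).im) := by
  change Real.cosh (paperclipParam (paperclipScale t) θ).re =
    Real.exp (-t) * Real.cos (paperclipParam (paperclipScale t) θ).im
  rw [exp_neg_eq_paperclipScale_div ht]
  exact cosh_re_paperclipParam (one_lt_paperclipScale ht) θ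

/-- Equivalence of the parametric paperclip with the implicit paperclip: for
`t < 0`, `a = (1 − e^{2t})^{−1/2}` and `z = −Log(a + e^{iθ}) + ½ log(a² − 1)`,
one has `cosh(Re z) = e^{−t} cos(Im z)`. -/
theorem paperclip_parametric_eq_implicit (t θ : ℝ) (ht : t < 0)
    (hθ : θ ∈ Set.Ioo (-Real.pi) Real.pi) :
    Real.cosh
        ((-Complex.log (((1 - Real.exp (2 * t)) ^ (-(1 : ℝ) / 2) : ℝ) +
            Complex.exp ((θ : ℂ) * Complex.I)) +
          (((1 / 2) * Real.log (((1 - Real.exp (2 * t)) ^ (-(1 : ℝ) / 2) : ℝ) ^ 2 - 1) : ℝ) :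
            ℂ)).re) =
      Real.exp (-t) *
        Real.cos
          ((-Complex.log (((1 - Real.exp (2 * t)) ^ (-(1 : ℝ) / 2) : ℝ) +
              Complex.exp ((θ : ℂ) * Complex.I)) +
            (((1 / 2) * Real.log (((1 - Real.exp (2 * t)) ^ (-(1 : ℝ) / 2) : ℝ) ^ 2 - 1) : ℝ) :
              ℂ)).im) :=
  paperclip_parametric_eq_implicit_general t θ ht
end

section
/- Equivalence of the parametric hairclip with the implicit hairclip: let t ∈ ℝ, set a = (1 + e^{2t})^{−1/2} (so 0 < a < 1), and for θ ∈ (−π, π) let z = −Log(a + e^{iθ}) + ½·log(1 − a²), using the principal complex logarithm. Then sinh(Re z) = −e^{−t}·cos(Im z); that is, the parametric curve coincides with the hairclip solution e^{−t}cos y = −sinh x. -/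
/-! With `w = a + e^{iθ}` and `s = √(1 - a²)`, the real part of `z` is `log (s / |w|)` and the
imaginary part is `-arg w`, so `sinh (Re z) = (s² - |w|²) / (2 s |w|)`. Since
`|w|² = a² + 2a cos θ + 1`, the numerator is `-2a (a + cos θ) = -2a |w| cos (arg w)`, giving
`sinh (Re z) = -(a / s) cos (Im z)`; and `a / s = e^{-t}` for `a = (1 + e^{2t})^{-1/2}`. -/

open Complex

noncomputable def hairclipParam (a θ : ℝ) : ℂ :=
  -log (a + exp (θ * I)) + (((1 / 2) * Real.log (1 - a ^ 2) : ℝ) : ℂ)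

lemma normSq_ofReal_add_exp_mul_I (a θ : ℝ) :
    normSq (a + exp (θ * I)) = a ^ 2 + 2 * a * Real.cos θ + 1 := by
  rw [normSq_apply]
  simp only [add_re, add_im, ofReal_re, ofReal_im, exp_ofReal_mul_I_re, exp_ofReal_mul_I_im]
  linear_combination Real.sin_sq_add_cos_sq θ

lemma ofReal_add_exp_mul_I_ne_zero {a : ℝ} (ha : |a| ≠ 1) (θ : ℝ) :
    (a : ℂ) + exp (θ * I) ≠ 0 := by
  have hnorm : |‖(a : ℂ)‖ - ‖-exp (θ * I)‖| ≤ ‖(a : ℂ) + exp (θ * I)‖ := by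
    simpa using abs_norm_sub_norm_le (a : ℂ) (-exp (θ * I))
  rw [norm_neg, norm_exp_ofReal_mul_I, norm_real, Real.norm_eq_abs] at hnorm
  have hgap : 0 < |(|a| - 1)| := abs_pos.mpr (sub_ne_zero.mpr ha)
  exact norm_pos_iff.mp (hgap.trans_le hnorm)

lemma hairclipParam_re (a θ : ℝ) :
    (hairclipParam a θ).re =
      (1 / 2) * Real.log (1 - a ^ 2) - Real.log ‖(a : ℂ) + exp (θ * I)‖ := by
  simp only [hairclipParam, add_re, neg_re, log_re, ofReal_re]
  ring

lemma hairclipParam_im (a θ : ℝ) :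
    (hairclipParam a θ).im = -arg (a + exp (θ * I)) := by
  simp [hairclipParam, log_im]

theorem sinh_hairclipParam_re {a : ℝ} (ha₀ : 0 < a) (ha₁ : a < 1) (θ : ℝ) :
    Real.sinh (hairclipParam a θ).re =
      -(a / √(1 - a ^ 2) * Real.cos (hairclipParam a θ).im) := by
  set w : ℂ := a + exp (θ * I)
  have hw : w ≠ 0 := ofReal_add_exp_mul_I_ne_zero (by rw [abs_of_pos ha₀]; exact ha₁.ne) θ
  have hr : 0 < ‖w‖ := norm_pos_iff.mpr hw
  have hs : 0 < 1 - a ^ 2 := by nlinarith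
  have hs' : 0 < √(1 - a ^ 2) := Real.sqrt_pos.mpr hs
  have hexp_re : Real.exp (hairclipParam a θ).re = √(1 - a ^ 2) / ‖w‖ := by
    rw [hairclipParam_re, Real.exp_sub, Real.exp_log hr, Real.sqrt_eq_rpow,
      Real.rpow_def_of_pos hs, mul_comm]
  have hcos_im : Real.cos (hairclipParam a θ).im = (a + Real.cos θ) / ‖w‖ := by
    rw [hairclipParam_im, Real.cos_neg, cos_arg hw]
    simp [w, exp_ofReal_mul_I_re]
  have hnorm : ‖w‖ ^ 2 = a ^ 2 + 2 * a * Real.cos θ + 1 := by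
    rw [← normSq_eq_norm_sq, normSq_ofReal_add_exp_mul_I]
  rw [Real.sinh_eq, Real.exp_neg, hexp_re, hcos_im]
  field_simp
  linear_combination Real.sq_sqrt hs.le - hnorm

lemma rpow_neg_half_sq {x : ℝ} (hx : 0 ≤ x) : (x ^ (-(1 : ℝ) / 2)) ^ 2 = x⁻¹ := by
  rw [← Real.rpow_natCast, ← Real.rpow_mul hx]
  norm_num [Real.rpow_neg_one]

lemma exp_neg_eq_div_sqrt_one_sub_sq (t : ℝ) :
    Real.exp (-t) =
      (1 + Real.exp (2 * t)) ^ (-(1 : ℝ) / 2) /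
        √(1 - ((1 + Real.exp (2 * t)) ^ (-(1 : ℝ) / 2)) ^ 2) := by
  set a := (1 + Real.exp (2 * t)) ^ (-(1 : ℝ) / 2)
  have hE : 0 < 1 + Real.exp (2 * t) := by positivity
  have ha : 0 < a := Real.rpow_pos_of_pos hE _
  have hsq : 1 - a ^ 2 = (Real.exp t * a) ^ 2 := by
    rw [mul_pow, rpow_neg_half_sq hE.le, ← Real.exp_nat_mul, Nat.cast_ofNat]
    field_simp
    ring
  rw [hsq, Real.sqrt_sq (by positivity), Real.exp_neg]
  field_simp

theorem hairclip_parametric_eq_implicit_general (t θ : ℝ) :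
    Real.sinh
        ((-Complex.log (((1 + Real.exp (2 * t)) ^ (-(1 : ℝ) / 2) : ℝ) +
            Complex.exp ((θ : ℂ) * Complex.I)) +
          (((1 / 2) * Real.log (1 - ((1 + Real.exp (2 * t)) ^ (-(1 : ℝ) / 2) : ℝ) ^ 2) : ℝ) :
            ℂ)).re) =
      -(Real.exp (-t) *
        Real.cos
          ((-Complex.log (((1 + Real.exp (2 * t)) ^ (-(1 : ℝ) / 2) : ℝ) +
              Complex.exp ((θ : ℂ) * Complex.I)) +
            (((1 / 2) * Real.log (1 - ((1 + Real.exp (2 * t)) ^ (-(1 : ℝ) / 2) : ℝ) ^ 2) : ℝ) :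
              ℂ)).im)) := by
  have ha₀ : 0 < (1 + Real.exp (2 * t)) ^ (-(1 : ℝ) / 2) := by positivity
  have ha₁ : (1 + Real.exp (2 * t)) ^ (-(1 : ℝ) / 2) < 1 :=
    Real.rpow_lt_one_of_one_lt_of_neg (by linarith [Real.exp_pos (2 * t)]) (by norm_num)
  rw [exp_neg_eq_div_sqrt_one_sub_sq]
  exact sinh_hairclipParam_re ha₀ ha₁ θ

/-- Equivalence of the parametric hairclip with the implicit hairclip: for
`t ∈ ℝ`, `a = (1 + e^{2t})^{−1/2}` and `z = −Log(a + e^{iθ}) + ½ log(1 − a²)`,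
one has `sinh(Re z) = −e^{−t} cos(Im z)`. -/
theorem hairclip_parametric_eq_implicit (t θ : ℝ)
    (hθ : θ ∈ Set.Ioo (-Real.pi) Real.pi) :
    Real.sinh
        ((-Complex.log (((1 + Real.exp (2 * t)) ^ (-(1 : ℝ) / 2) : ℝ) +
            Complex.exp ((θ : ℂ) * Complex.I)) +
          (((1 / 2) * Real.log (1 - ((1 + Real.exp (2 * t)) ^ (-(1 : ℝ) / 2) : ℝ) ^ 2) : ℝ) :
            ℂ)).re) =
      -(Real.exp (-t) *
        Real.cos
          ((-Complex.log (((1 + Real.exp (2 * t)) ^ (-(1 : ℝ) / 2) : ℝ) +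
              Complex.exp ((θ : ℂ) * Complex.I)) +
            (((1 / 2) * Real.log (1 - ((1 + Real.exp (2 * t)) ^ (-(1 : ℝ) / 2) : ℝ) ^ 2) : ℝ) :
              ℂ)).im)) :=
  hairclip_parametric_eq_implicit_general t θ
end

section
/- The paperclip satisfies the graphical curve shortening equation: for t < 0 and y with e^{−t}·cos y > 1, the function u(y,t) = log( w + √(w² − 1) ) with w = e^{−t}·cos y (i.e. u = arccosh(e^{−t}cos y)) satisfies u_t·(1 + u_y²) = u_yy; explicitly, with Q = √(w² − 1) and s = e^{−t}, u_t = −w/Q, u_y = −s·sin y/Q, 1 + u_y² = (s² − 1)/Q², and u_yy = −w(s² − 1)/Q³. -/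
/-!
Write `s = e^{-t}`, `w = s cos y` and `Q = √(w² - 1)`, so that `u = arccosh w`. The chain rule for
`arccosh` gives `u_t = -w/Q` and `u_y = -s sin y/Q`. Since `s² sin² y = s² - w² = (s² - 1) - Q²`,
`1 + u_y² = (s² - 1)/Q²`; differentiating `u_y` once more in `y` gives `u_yy = -w(s² - 1)/Q³`,
and the curve shortening equation `u_t (1 + u_y²) = u_yy` is then a matter of multiplying out.
-/

open Real

theorem HasDerivAt.log_add_sqrt_sq_sub_one {f : ℝ → ℝ} {f' x : ℝ} (hf : HasDerivAt f f' x)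
    (h1 : 1 < f x) :
    HasDerivAt (fun z => Real.log (f z + √(f z ^ 2 - 1))) (f' / √(f x ^ 2 - 1)) x := by
  have hpos : 0 < f x ^ 2 - 1 := by nlinarith
  have hQ : 0 < √(f x ^ 2 - 1) := sqrt_pos.2 hpos
  have hsqrt : HasDerivAt (fun z => √(f z ^ 2 - 1)) (2 * f x * f' / (2 * √(f x ^ 2 - 1))) x := by
    simpa using ((hf.pow 2).sub_const 1).sqrt hpos.ne'
  have hsum : HasDerivAt (fun z => f z + √(f z ^ 2 - 1))
      (f' + 2 * f x * f' / (2 * √(f x ^ 2 - 1))) x := hf.add hsqrt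
  refine (hsum.log (add_pos (by linarith) hQ).ne').congr_deriv ?_
  field_simp
  ring

section Paperclip

variable {s y : ℝ}

theorem one_add_sq_sin_div_sqrt (hw : 1 < s * cos y) :
    1 + (-(s * sin y) / √((s * cos y) ^ 2 - 1)) ^ 2 = (s ^ 2 - 1) / √((s * cos y) ^ 2 - 1) ^ 2 := by
  have hpos : 0 < (s * cos y) ^ 2 - 1 := by nlinarith
  rw [div_pow, sq_sqrt hpos.le, neg_sq, one_add_div hpos.ne']
  congr 1
  linear_combination s ^ 2 * sin_sq_add_cos_sq y

theorem hasDerivAt_sin_div_sqrt (hw : 1 < s * cos y) :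
    HasDerivAt (fun η => -(s * sin η) / √((s * cos η) ^ 2 - 1))
      (-(s * cos y) * (s ^ 2 - 1) / √((s * cos y) ^ 2 - 1) ^ 3) y := by
  have hpos : 0 < (s * cos y) ^ 2 - 1 := by nlinarith
  set Q := √((s * cos y) ^ 2 - 1) with hQ_def
  have hQ : 0 < Q := sqrt_pos.2 hpos
  have hQ2 : Q ^ 2 = (s * cos y) ^ 2 - 1 := sq_sqrt hpos.le
  have hnum : HasDerivAt (fun η => -(s * sin η)) (-(s * cos y)) y :=
    ((hasDerivAt_sin y).const_mul s).neg
  have hcos : HasDerivAt (fun η => s * cos η) (-(s * sin y)) y := by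
    simpa using (hasDerivAt_cos y).const_mul s
  have hden : HasDerivAt (fun η => √((s * cos η) ^ 2 - 1))
      (2 * (s * cos y) * -(s * sin y) / (2 * Q)) y := by
    simpa using ((hcos.pow 2).sub_const 1).sqrt hpos.ne'
  refine (hnum.div hden hQ.ne').congr_deriv ?_
  rw [← hQ_def]
  field_simp
  linear_combination (-(s * cos y)) * hQ2 - s ^ 3 * cos y * sin_sq_add_cos_sq y

end Paperclip

theorem paperclip_graphical_general (t y : ℝ)
    (hw : 1 < Real.exp (-t) * Real.cos y) :
    HasDerivAt
      (fun τ : ℝ => Real.log (Real.exp (-τ) * Real.cos y +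
        Real.sqrt ((Real.exp (-τ) * Real.cos y) ^ 2 - 1)))
      (-(Real.exp (-t) * Real.cos y) /
        Real.sqrt ((Real.exp (-t) * Real.cos y) ^ 2 - 1)) t ∧
    HasDerivAt
      (fun η : ℝ => Real.log (Real.exp (-t) * Real.cos η +
        Real.sqrt ((Real.exp (-t) * Real.cos η) ^ 2 - 1)))
      (-(Real.exp (-t) * Real.sin y) /
        Real.sqrt ((Real.exp (-t) * Real.cos y) ^ 2 - 1)) y ∧
    1 + (-(Real.exp (-t) * Real.sin y) /
          Real.sqrt ((Real.exp (-t) * Real.cos y) ^ 2 - 1)) ^ 2 =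
      (Real.exp (-t) ^ 2 - 1) / Real.sqrt ((Real.exp (-t) * Real.cos y) ^ 2 - 1) ^ 2 ∧
    HasDerivAt
      (fun η : ℝ => -(Real.exp (-t) * Real.sin η) /
        Real.sqrt ((Real.exp (-t) * Real.cos η) ^ 2 - 1))
      (-(Real.exp (-t) * Real.cos y) * (Real.exp (-t) ^ 2 - 1) /
        Real.sqrt ((Real.exp (-t) * Real.cos y) ^ 2 - 1) ^ 3) y ∧
    (-(Real.exp (-t) * Real.cos y) /
        Real.sqrt ((Real.exp (-t) * Real.cos y) ^ 2 - 1)) *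
      ((Real.exp (-t) ^ 2 - 1) / Real.sqrt ((Real.exp (-t) * Real.cos y) ^ 2 - 1) ^ 2) =
      -(Real.exp (-t) * Real.cos y) * (Real.exp (-t) ^ 2 - 1) /
        Real.sqrt ((Real.exp (-t) * Real.cos y) ^ 2 - 1) ^ 3 := by
  have hw_t : HasDerivAt (fun τ => exp (-τ) * cos y) (-(exp (-t) * cos y)) t := by
    simpa using ((hasDerivAt_neg t).exp).mul_const (cos y)
  have hw_y : HasDerivAt (fun η => exp (-t) * cos η) (-(exp (-t) * sin y)) y := by
    simpa using (hasDerivAt_cos y).const_mul (exp (-t))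
  refine ⟨hw_t.log_add_sqrt_sq_sub_one hw, hw_y.log_add_sqrt_sq_sub_one hw,
    one_add_sq_sin_div_sqrt hw, hasDerivAt_sin_div_sqrt hw, ?_⟩
  rw [div_mul_div_comm]
  ring

/-- The paperclip branch `u(y,t) = log(w + √(w² − 1))`, `w = e^{−t} cos y > 1`,
satisfies the graphical curve shortening equation `u_t(1 + u_y²) = u_yy`:
with `Q = √(w² − 1)` and `s = e^{−t}`, `u_t = −w/Q`, `u_y = −s sin y/Q`,
`1 + u_y² = (s² − 1)/Q²`, `u_yy = −w(s² − 1)/Q³`, and the equation holds. -/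
theorem paperclip_graphical (t y : ℝ) (ht : t < 0)
    (hw : 1 < Real.exp (-t) * Real.cos y) :
    HasDerivAt
      (fun τ : ℝ => Real.log (Real.exp (-τ) * Real.cos y +
        Real.sqrt ((Real.exp (-τ) * Real.cos y) ^ 2 - 1)))
      (-(Real.exp (-t) * Real.cos y) /
        Real.sqrt ((Real.exp (-t) * Real.cos y) ^ 2 - 1)) t ∧
    HasDerivAt
      (fun η : ℝ => Real.log (Real.exp (-t) * Real.cos η +
        Real.sqrt ((Real.exp (-t) * Real.cos η) ^ 2 - 1)))
      (-(Real.exp (-t) * Real.sin y) /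
        Real.sqrt ((Real.exp (-t) * Real.cos y) ^ 2 - 1)) y ∧
    1 + (-(Real.exp (-t) * Real.sin y) /
          Real.sqrt ((Real.exp (-t) * Real.cos y) ^ 2 - 1)) ^ 2 =
      (Real.exp (-t) ^ 2 - 1) / Real.sqrt ((Real.exp (-t) * Real.cos y) ^ 2 - 1) ^ 2 ∧
    HasDerivAt
      (fun η : ℝ => -(Real.exp (-t) * Real.sin η) /
        Real.sqrt ((Real.exp (-t) * Real.cos η) ^ 2 - 1))
      (-(Real.exp (-t) * Real.cos y) * (Real.exp (-t) ^ 2 - 1) /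
        Real.sqrt ((Real.exp (-t) * Real.cos y) ^ 2 - 1) ^ 3) y ∧
    (-(Real.exp (-t) * Real.cos y) /
        Real.sqrt ((Real.exp (-t) * Real.cos y) ^ 2 - 1)) *
      ((Real.exp (-t) ^ 2 - 1) / Real.sqrt ((Real.exp (-t) * Real.cos y) ^ 2 - 1) ^ 2) =
      -(Real.exp (-t) * Real.cos y) * (Real.exp (-t) ^ 2 - 1) /
        Real.sqrt ((Real.exp (-t) * Real.cos y) ^ 2 - 1) ^ 3 :=
  paperclip_graphical_general t y hw
end

section
/- The hairclip satisfies the graphical curve shortening equation: for all t ∈ ℝ and all y ∈ ℝ, the function u(y,t) = −arsinh(e^{−t}·cos y) satisfies u_t·(1 + u_y²) = u_yy; explicitly, with w = e^{−t}cos y, Q = √(1 + w²), and s = e^{−t}, u_t = w/Q, u_y = s·sin y/Q, 1 + u_y² = (1 + s²)/Q², and u_yy = w(1 + s²)/Q³. -/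
open Real

/-! The derivatives come from the chain and quotient rules. Beyond `Q² = 1 + w²`, the only identity
needed is `sin² y + cos² y = 1`, which turns `Q² + s² sin² y` into `1 + s²`; the equation is then
`u_t (1 + u_y²) = (w / Q) · (1 + s²) / Q² = u_yy`. -/

section Calculus

variable {f : ℝ → ℝ} {f' x : ℝ}

theorem HasDerivAt.neg_arsinh (hf : HasDerivAt f f' x) :
    HasDerivAt (fun x => -Real.arsinh (f x)) (-f' / √(1 + f x ^ 2)) x := by
  refine hf.arsinh.neg.congr_deriv ?_
  rw [smul_eq_mul, inv_mul_eq_div, neg_div]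

theorem HasDerivAt.sqrt_one_add_sq (hf : HasDerivAt f f' x) :
    HasDerivAt (fun x => √(1 + f x ^ 2)) (f x * f' / √(1 + f x ^ 2)) x := by
  convert ((hf.fun_pow 2).const_add 1).sqrt (by positivity) using 1
  field_simp
  ring

end Calculus

theorem hasDerivAt_mul_cos (s y : ℝ) :
    HasDerivAt (fun η => s * cos η) (-(s * sin y)) y := by
  simpa only [mul_neg] using (hasDerivAt_cos y).const_mul s

theorem hasDerivAt_neg_arsinh_exp_neg_mul (c t : ℝ) :
    HasDerivAt (fun τ => -arsinh (exp (-τ) * c)) (exp (-t) * c / √(1 + (exp (-t) * c) ^ 2)) t := by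
  have hexp : HasDerivAt (fun τ => exp (-τ) * c) (-(exp (-t) * c)) t := by
    simpa only [mul_neg_one, neg_mul] using ((hasDerivAt_neg t).exp).mul_const c
  simpa only [neg_neg] using hexp.neg_arsinh

theorem hasDerivAt_neg_arsinh_mul_cos (s y : ℝ) :
    HasDerivAt (fun η => -arsinh (s * cos η)) (s * sin y / √(1 + (s * cos y) ^ 2)) y := by
  simpa only [neg_neg] using (hasDerivAt_mul_cos s y).neg_arsinh

theorem one_add_sq_mul_sin_div_sqrt (s y : ℝ) :
    1 + (s * sin y / √(1 + (s * cos y) ^ 2)) ^ 2 = (1 + s ^ 2) / √(1 + (s * cos y) ^ 2) ^ 2 := by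
  have hQsq : √(1 + (s * cos y) ^ 2) ^ 2 = 1 + (s * cos y) ^ 2 := sq_sqrt (by positivity)
  have hne : 1 + (s * cos y) ^ 2 ≠ 0 := by positivity
  rw [div_pow, hQsq, eq_div_iff hne, add_mul, div_mul_cancel₀ _ hne]
  linear_combination s ^ 2 * sin_sq_add_cos_sq y

theorem hasDerivAt_mul_sin_div_sqrt (s y : ℝ) :
    HasDerivAt (fun η => s * sin η / √(1 + (s * cos η) ^ 2))
      (s * cos y * (1 + s ^ 2) / √(1 + (s * cos y) ^ 2) ^ 3) y := by
  have hQ : 0 < √(1 + (s * cos y) ^ 2) := sqrt_pos.2 (by positivity)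
  have hQsq : √(1 + (s * cos y) ^ 2) ^ 2 = 1 + (s * cos y) ^ 2 := sq_sqrt (by positivity)
  refine (((hasDerivAt_sin y).const_mul s).div
    (hasDerivAt_mul_cos s y).sqrt_one_add_sq hQ.ne').congr_deriv ?_
  field_simp
  rw [mul_pow] at hQsq
  linear_combination s * cos y * hQsq + s ^ 3 * cos y * sin_sq_add_cos_sq y

/-- The hairclip `u(y,t) = −arsinh(e^{−t} cos y)` satisfies the graphical curve
shortening equation `u_t(1 + u_y²) = u_yy`: with `w = e^{−t} cos y`,
`Q = √(1 + w²)`, `s = e^{−t}`, one has `u_t = w/Q`, `u_y = s sin y/Q`,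
`1 + u_y² = (1 + s²)/Q²`, `u_yy = w(1 + s²)/Q³`, and the equation holds. -/
theorem hairclip_graphical (t y : ℝ) :
    HasDerivAt (fun τ : ℝ => -Real.arsinh (Real.exp (-τ) * Real.cos y))
      ((Real.exp (-t) * Real.cos y) /
        Real.sqrt (1 + (Real.exp (-t) * Real.cos y) ^ 2)) t ∧
    HasDerivAt (fun η : ℝ => -Real.arsinh (Real.exp (-t) * Real.cos η))
      ((Real.exp (-t) * Real.sin y) /
        Real.sqrt (1 + (Real.exp (-t) * Real.cos y) ^ 2)) y ∧
    1 + ((Real.exp (-t) * Real.sin y) /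
          Real.sqrt (1 + (Real.exp (-t) * Real.cos y) ^ 2)) ^ 2 =
      (1 + Real.exp (-t) ^ 2) / Real.sqrt (1 + (Real.exp (-t) * Real.cos y) ^ 2) ^ 2 ∧
    HasDerivAt
      (fun η : ℝ => (Real.exp (-t) * Real.sin η) /
        Real.sqrt (1 + (Real.exp (-t) * Real.cos η) ^ 2))
      ((Real.exp (-t) * Real.cos y) * (1 + Real.exp (-t) ^ 2) /
        Real.sqrt (1 + (Real.exp (-t) * Real.cos y) ^ 2) ^ 3) y ∧
    ((Real.exp (-t) * Real.cos y) /
        Real.sqrt (1 + (Real.exp (-t) * Real.cos y) ^ 2)) *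
      ((1 + Real.exp (-t) ^ 2) / Real.sqrt (1 + (Real.exp (-t) * Real.cos y) ^ 2) ^ 2) =
      (Real.exp (-t) * Real.cos y) * (1 + Real.exp (-t) ^ 2) /
        Real.sqrt (1 + (Real.exp (-t) * Real.cos y) ^ 2) ^ 3 := by
  refine ⟨hasDerivAt_neg_arsinh_exp_neg_mul _ t, hasDerivAt_neg_arsinh_mul_cos _ y,
    one_add_sq_mul_sin_div_sqrt _ y, hasDerivAt_mul_sin_div_sqrt _ y, ?_⟩
  rw [div_mul_div_comm, ← pow_succ']
end
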